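/- arXiv:1210.1600 — 3 statements merged into one kernel-verified Lean document; each statement's English description precedes it below -/
import Mathlib

section
/- Let p be an odd prime, a ∈ Z a quadratic non-residue modulo p, and f(x) = x_1² − a x_2² − p x_3² + a p x_4² on Q_p⁴. Then f is elliptic: f(x) = 0 if and only if x = 0. -/
open MeasureTheory Complex Classical Filter

variable (p : ℕ) [Fact p.Prime]

noncomputable instance : MeasurableSpace ℚ_[p] := borel _
instance : BorelSpace ℚ_[p] := ⟨rfl⟩
noncomputable instance (n : ℕ) : MeasurableSpace (Fin n → ℚ_[p]) := borel _
instance (n : ℕ) : BorelSpace (Fin n → ℚ_[p]) := ⟨rfl⟩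

/-- Haar measure on `ℚ_p` normalized so that `ℤ_p` (the closed unit ball) has measure 1. -/
noncomputable def haarQ : Measure ℚ_[p] :=
  Measure.addHaarMeasure ⟨⟨Metric.closedBall 0 1, isCompact_closedBall 0 1⟩,
    ⟨0, mem_interior_iff_mem_nhds.2 (Metric.closedBall_mem_nhds 0 one_pos)⟩⟩

/-- Haar measure on `ℚ_p^n` normalized so that `ℤ_p^n` has measure 1. -/
noncomputable def haarQn (n : ℕ) : Measure (Fin n → ℚ_[p]) :=
  Measure.addHaarMeasure ⟨⟨Metric.closedBall 0 1, isCompact_closedBall 0 1⟩,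
    ⟨0, mem_interior_iff_mem_nhds.2 (Metric.closedBall_mem_nhds 0 one_pos)⟩⟩

/-- The p-adic fractional part of `x` : the unique rational of the form `z / p^n`
lying in `[0,1)` with `x - r ∈ ℤ_p`. -/
noncomputable def padicFract (x : ℚ_[p]) : ℚ :=
  if h : ∃ r : ℚ, (∃ (z : ℤ) (n : ℕ), r = (z : ℚ) / (p : ℚ) ^ n) ∧ 0 ≤ r ∧ r < 1 ∧
      ‖x - (r : ℚ_[p])‖ ≤ 1 then h.choose else 0

/-- The standard additive character `χ(y) = exp(2 π i {y}_p)` of `ℚ_p`. -/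
noncomputable def stdChar (y : ℚ_[p]) : ℂ :=
  Complex.exp (2 * Real.pi * Complex.I * (padicFract p y : ℂ))

/-- A Bruhat–Schwartz (test) function: locally constant with compact support. -/
def IsBruhatSchwartz {E : Type*} [TopologicalSpace E] (φ : E → ℂ) : Prop :=
  IsLocallyConstant φ ∧ HasCompactSupport φ

/-- Fourier transform on `ℚ_p`. -/
noncomputable def fourier1 (φ : ℚ_[p] → ℂ) (ξ : ℚ_[p]) : ℂ :=
  ∫ x, stdChar p (-(ξ * x)) * φ x ∂haarQ p

/-- Fourier transform on `ℚ_p^n`. -/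
noncomputable def fourierN (n : ℕ) (φ : (Fin n → ℚ_[p]) → ℂ) (ξ : Fin n → ℚ_[p]) : ℂ :=
  ∫ x, stdChar p (-(∑ i, ξ i * x i)) * φ x ∂haarQn p n

/-- Inverse Fourier transform on `ℚ_p^n`. -/
noncomputable def fourierInvN (n : ℕ) (φ : (Fin n → ℚ_[p]) → ℂ) (x : Fin n → ℚ_[p]) : ℂ :=
  ∫ ξ, stdChar p (∑ i, x i * ξ i) * φ ξ ∂haarQn p n

/-- The elliptic quadratic form `f(x) = x₁² - a x₂² - p x₃² + a p x₄²`. -/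
noncomputable def Qf (a : ℤ) (x : Fin 4 → ℚ_[p]) : ℚ_[p] :=
  x 0 ^ 2 - (a : ℚ_[p]) * x 1 ^ 2 - (p : ℚ_[p]) * x 2 ^ 2 + (a : ℚ_[p]) * (p : ℚ_[p]) * x 3 ^ 2

/-- The dual elliptic quadratic form `f°(x) = a p x₁² - p x₂² - a x₃² + x₄²`. -/
noncomputable def QfCirc (a : ℤ) (x : Fin 4 → ℚ_[p]) : ℚ_[p] :=
  (a : ℚ_[p]) * (p : ℚ_[p]) * x 0 ^ 2 - (p : ℚ_[p]) * x 1 ^ 2 - (a : ℚ_[p]) * x 2 ^ 2 + x 3 ^ 2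

/-! Since `a` is not a square mod `p`, for every `t ∈ ℤ_p` the element `t² - a` is a unit
(its reduction mod `p` is nonzero). Hence `|u² - a v²| = max(|u|, |v|)²` on `ℚ_p`, and `f(x) = 0`
forces `max(|x₁|, |x₂|)² = p⁻¹ · max(|x₃|, |x₄|)²`. The norms of `ℚ_p` lie in `p^ℤ`, so `p⁻¹` is not
a quotient of two squared norms and both sides must vanish. -/

theorem PadicInt.isUnit_sq_sub_intCast {p : ℕ} [Fact p.Prime] {a : ℤ}
    (ha : legendreSym p a = -1) (t : ℤ_[p]) : IsUnit (t ^ 2 - (a : ℤ_[p])) := by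
  by_contra h
  have h0 : PadicInt.toZMod (t ^ 2 - (a : ℤ_[p])) = 0 := by
    rwa [← RingHom.mem_ker, PadicInt.ker_toZMod, IsLocalRing.mem_maximalIdeal, mem_nonunits_iff]
  refine (legendreSym.eq_neg_one_iff p).mp ha ⟨PadicInt.toZMod t, ?_⟩
  rw [map_sub, map_pow, map_intCast, sub_eq_zero] at h0
  rw [← h0, sq]

namespace Padic

variable {p : ℕ} [Fact p.Prime]

theorem norm_sq_sub_intCast_mul_sq {a : ℤ} (ha : legendreSym p a = -1) (u v : ℚ_[p]) :
    ‖u ^ 2 - a * v ^ 2‖ = max ‖u‖ ‖v‖ ^ 2 := by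
  rcases lt_or_ge ‖v‖ ‖u‖ with huv | huv
  · have hlt : ‖(a : ℚ_[p]) * v ^ 2‖ < ‖u ^ 2‖ := by
      rw [norm_mul, norm_pow, norm_pow]
      calc ‖(a : ℚ_[p])‖ * ‖v‖ ^ 2 ≤ ‖v‖ ^ 2 :=
            mul_le_of_le_one_left (by positivity) (norm_int_le_one a)
        _ < ‖u‖ ^ 2 := by gcongr
    rw [sub_eq_add_neg, IsUltrametricDist.norm_add_eq_max_of_norm_ne_norm (by simpa using hlt.ne'),
      norm_neg, max_eq_left hlt.le, max_eq_left huv.le, norm_pow]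
  · rcases eq_or_ne v 0 with rfl | hv
    · simp_all
    have ht : ‖u / v‖ ≤ 1 := by
      rw [norm_div]; exact div_le_one_of_le₀ huv (norm_nonneg v)
    have hunit : ‖(u / v) ^ 2 - a‖ = 1 :=
      PadicInt.isUnit_iff.mp (PadicInt.isUnit_sq_sub_intCast ha ⟨u / v, ht⟩)
    have hfac : u ^ 2 - a * v ^ 2 = v ^ 2 * ((u / v) ^ 2 - a) := by field_simp
    rw [hfac, norm_mul, norm_pow, max_eq_right huv, hunit, mul_one]

theorem norm_sq_ne_norm_p (t : ℚ_[p]) : ‖t‖ ^ 2 ≠ ‖(p : ℚ_[p])‖ := by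
  rcases eq_or_ne t 0 with rfl | ht
  · simp [norm_p, eq_comm, (Fact.out : p.Prime).ne_zero]
  intro h
  have hp : (1 : ℝ) < p := by exact_mod_cast (Fact.out : p.Prime).one_lt
  rw [← norm_pow, norm_eq_zpow_neg_valuation (pow_ne_zero 2 ht),
    norm_eq_zpow_neg_valuation (by exact_mod_cast (Fact.out : p.Prime).ne_zero),
    zpow_right_inj₀ (by positivity) hp.ne', valuation_pow, valuation_p] at h
  omega

end Padic

theorem Qf_elliptic_general (p : ℕ) [Fact p.Prime]
    (a : ℤ) (ha : legendreSym p a = -1) :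
    ∀ x : Fin 4 → ℚ_[p], Qf p a x = 0 ↔ x = 0 := by
  intro x
  refine ⟨fun h => ?_, by rintro rfl; simp [Qf]⟩
  have hsplit : x 0 ^ 2 - a * x 1 ^ 2 = p * (x 2 ^ 2 - a * x 3 ^ 2) := by
    unfold Qf at h; linear_combination h
  have hnorm := congrArg norm hsplit
  rw [norm_mul, Padic.norm_sq_sub_intCast_mul_sq ha, Padic.norm_sq_sub_intCast_mul_sq ha] at hnorm
  obtain ⟨y, hy⟩ : ∃ y : ℚ_[p], max ‖x 0‖ ‖x 1‖ = ‖y‖ := (max_choice _ _).elim (⟨_, ·⟩) (⟨_, ·⟩)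
  obtain ⟨z, hz⟩ : ∃ z : ℚ_[p], max ‖x 2‖ ‖x 3‖ = ‖z‖ := (max_choice _ _).elim (⟨_, ·⟩) (⟨_, ·⟩)
  have hz0 : z = 0 := by
    by_contra hz0
    refine Padic.norm_sq_ne_norm_p (y / z) ?_
    rw [norm_div, div_pow, ← hy, hnorm, hz, mul_div_cancel_right₀ _ (by simpa using hz0)]
  have h23 : x 2 = 0 ∧ x 3 = 0 := by simpa [hz0] using hz.le
  have h01 : x 0 = 0 ∧ x 1 = 0 := by
    have hmax : max ‖x 0‖ ‖x 1‖ = 0 := by simpa [hz, hz0] using hnorm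
    simpa using hmax.le
  ext i
  fin_cases i <;> simp [h01, h23]

/-- The quadratic form `f(x) = x₁² - a x₂² - p x₃² + a p x₄²`, with `a` a quadratic
non-residue mod `p`, is elliptic: `f(x) = 0 ↔ x = 0`. -/
theorem Qf_elliptic (p : ℕ) [Fact p.Prime] (hp : p ≠ 2)
    (a : ℤ) (ha : legendreSym p a = -1) :
    ∀ x : Fin 4 → ℚ_[p], Qf p a x = 0 ↔ x = 0 :=
  Qf_elliptic_general p a ha
end

section
/- Let p be an odd prime, a ∈ Z a quadratic non-residue mod p, and f(x) = x_1² − a x_2² − p x_3² + a p x_4² on Q_p⁴. There exist positive constants A, B such that B·‖x‖_p² ≤ |f(x)|_p ≤ A·‖x‖_p² for all x ∈ Q_p⁴, where ‖x‖_p = max_i |x_i|_p. -/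
open MeasureTheory Complex Classical Filter

variable (p : ℕ) [Fact p.Prime]

section AuxElliptic

variable {p}

/-- If neither `u` nor `v` is divisible by `p` entirely (one is a unit) and `a` is a
non-residue, then `u² - a v²` is a unit. -/
lemma aux_unit (a : ℤ) (ha : ¬ IsSquare ((a : ZMod p)))
    (u v : ℚ_[p]) (hu : ‖u‖ ≤ 1) (hv : ‖v‖ ≤ 1) (h1 : ‖u‖ = 1 ∨ ‖v‖ = 1) :
    ‖u ^ 2 - (a : ℚ_[p]) * v ^ 2‖ = 1 := by
  set U : ℤ_[p] := ⟨u, hu⟩ with hU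
  set V : ℤ_[p] := ⟨v, hv⟩ with hV
  have hker : ∀ x : ℤ_[p], PadicInt.toZMod x = 0 ↔ ‖x‖ < 1 := by
    intro x
    rw [← RingHom.mem_ker, PadicInt.ker_toZMod, PadicInt.maximalIdeal_eq_span_p,
      Ideal.mem_span_singleton, ← PadicInt.norm_lt_one_iff_dvd]
  have key : u ^ 2 - (a : ℚ_[p]) * v ^ 2 = ((U ^ 2 - (a : ℤ_[p]) * V ^ 2 : ℤ_[p]) : ℚ_[p]) := by
    push_cast
    rfl
  rw [key, ← PadicInt.norm_def]
  by_contra hne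
  have hlt : ‖U ^ 2 - (a : ℤ_[p]) * V ^ 2‖ < 1 :=
    lt_of_le_of_ne (PadicInt.norm_le_one _) hne
  have h0 : PadicInt.toZMod (U ^ 2 - (a : ℤ_[p]) * V ^ 2) = 0 := (hker _).mpr hlt
  rw [map_sub, map_mul, map_pow, map_pow, map_intCast, sub_eq_zero] at h0
  by_cases hV0 : PadicInt.toZMod V = 0
  · rw [hV0] at h0
    have hU0 : PadicInt.toZMod U = 0 := by
      have : (PadicInt.toZMod U) ^ 2 = 0 := by rw [h0]; ring
      exact pow_eq_zero_iff (two_ne_zero) |>.mp this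
    have hu' : ‖U‖ < 1 := (hker U).mp hU0
    have hv' : ‖V‖ < 1 := (hker V).mp hV0
    rcases h1 with h | h
    · rw [show ‖u‖ = ‖U‖ from rfl] at h; exact absurd h hu'.ne
    · rw [show ‖v‖ = ‖V‖ from rfl] at h; exact absurd h hv'.ne
  · apply ha
    refine ⟨PadicInt.toZMod U / PadicInt.toZMod V, ?_⟩
    field_simp
    linear_combination -h0

lemma aux_scale (a : ℤ) (ha : ¬ IsSquare ((a : ZMod p)))
    (u v c : ℚ_[p]) (hc : c ≠ 0) (hcu : ‖u‖ ≤ ‖c‖) (hcv : ‖v‖ ≤ ‖c‖)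
    (hmax : ‖u‖ = ‖c‖ ∨ ‖v‖ = ‖c‖) :
    ‖u ^ 2 - (a : ℚ_[p]) * v ^ 2‖ = ‖c‖ ^ 2 := by
  have hcn : (0 : ℝ) < ‖c‖ := norm_pos_iff.mpr hc
  have key : u ^ 2 - (a : ℚ_[p]) * v ^ 2 = c ^ 2 * ((u / c) ^ 2 - (a : ℚ_[p]) * (v / c) ^ 2) := by
    field_simp
  rw [key, norm_mul, norm_pow]
  have h1 : ‖u / c‖ ≤ 1 := by rw [norm_div]; exact div_le_one_of_le₀ hcu (norm_nonneg _)
  have h2 : ‖v / c‖ ≤ 1 := by rw [norm_div]; exact div_le_one_of_le₀ hcv (norm_nonneg _)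
  have h3 : ‖u / c‖ = 1 ∨ ‖v / c‖ = 1 := by
    rcases hmax with h | h
    · left; rw [norm_div, h, div_self hcn.ne']
    · right; rw [norm_div, h, div_self hcn.ne']
  rw [aux_unit a ha _ _ h1 h2 h3, mul_one]

/-- The norm of the binary form `u² - a v²` is exactly `max(‖u‖, ‖v‖)²`. -/
lemma aux_gnorm (a : ℤ) (ha : ¬ IsSquare ((a : ZMod p))) (u v : ℚ_[p]) :
    ‖u ^ 2 - (a : ℚ_[p]) * v ^ 2‖ = (max ‖u‖ ‖v‖) ^ 2 := by
  rcases le_total ‖u‖ ‖v‖ with h | h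
  · rw [max_eq_right h]
    by_cases hv : v = 0
    · have hu : u = 0 := by
        have : ‖u‖ ≤ 0 := h.trans (by simp [hv])
        simpa using le_antisymm this (norm_nonneg _)
      simp [hu, hv]
    · exact aux_scale a ha u v v hv h le_rfl (Or.inr rfl)
  · rw [max_eq_left h]
    by_cases hu : u = 0
    · have hv : v = 0 := by
        have : ‖v‖ ≤ 0 := h.trans (by simp [hu])
        simpa using le_antisymm this (norm_nonneg _)
      simp [hu, hv]
    · exact aux_scale a ha u v u hu le_rfl h (Or.inl rfl)

/-- Nonzero padic norms are integer powers of `p`. -/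
lemma aux_pow (u v : ℚ_[p]) (h : max ‖u‖ ‖v‖ ≠ 0) :
    ∃ k : ℤ, max ‖u‖ ‖v‖ = (p : ℝ) ^ k := by
  rcases max_cases ‖u‖ ‖v‖ with ⟨he, _⟩ | ⟨he, _⟩ <;> rw [he] at h ⊢
  · exact ⟨-u.valuation, Padic.norm_eq_zpow_neg_valuation (by simpa using h)⟩
  · exact ⟨-v.valuation, Padic.norm_eq_zpow_neg_valuation (by simpa using h)⟩

end AuxElliptic

/-- Two-sided quadratic bound for the elliptic form `f`:
`B ‖x‖² ≤ |f(x)|_p ≤ A ‖x‖²` on `ℚ_p⁴`. -/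
theorem Qf_elliptic_bounds (p : ℕ) [Fact p.Prime] (hp : p ≠ 2)
    (a : ℤ) (ha : legendreSym p a = -1) :
    ∃ A B : ℝ, 0 < A ∧ 0 < B ∧
      ∀ x : Fin 4 → ℚ_[p], B * ‖x‖ ^ 2 ≤ ‖Qf p a x‖ ∧ ‖Qf p a x‖ ≤ A * ‖x‖ ^ 2 := by
  have hprime : p.Prime := Fact.out
  have hp1 : (1 : ℝ) < p := by exact_mod_cast hprime.one_lt
  have hp0 : (0 : ℝ) < p := lt_trans one_pos hp1
  have ha' : ¬ IsSquare ((a : ZMod p)) := (legendreSym.eq_neg_one_iff p).mp ha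
  refine ⟨1, (p : ℝ)⁻¹, one_pos, inv_pos.mpr hp0, fun x => ?_⟩
  set M1 : ℝ := max ‖x 0‖ ‖x 1‖ with hM1
  set M2 : ℝ := max ‖x 2‖ ‖x 3‖ with hM2
  set M : ℝ := max M1 M2 with hM
  have hM1n : 0 ≤ M1 := le_max_of_le_left (norm_nonneg _)
  have hM2n : 0 ≤ M2 := le_max_of_le_left (norm_nonneg _)
  have hMn : 0 ≤ M := le_max_of_le_left hM1n
  set g1 : ℚ_[p] := x 0 ^ 2 - (a : ℚ_[p]) * x 1 ^ 2 with hg1def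
  set g2 : ℚ_[p] := x 2 ^ 2 - (a : ℚ_[p]) * x 3 ^ 2 with hg2def
  have hg1 : ‖g1‖ = M1 ^ 2 := aux_gnorm a ha' (x 0) (x 1)
  have hg2 : ‖g2‖ = M2 ^ 2 := aux_gnorm a ha' (x 2) (x 3)
  have hpg2 : ‖-((p : ℚ_[p]) * g2)‖ = (p : ℝ)⁻¹ * M2 ^ 2 := by
    rw [norm_neg, norm_mul, Padic.norm_p, hg2]
  have hfdef : Qf p a x = g1 + -((p : ℚ_[p]) * g2) := by
    rw [hg1def, hg2def]; unfold Qf; ring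
  -- ‖x‖ = M
  have hxle : ‖x‖ ≤ M := by
    rw [pi_norm_le_iff_of_nonneg hMn]
    intro i
    fin_cases i
    · exact le_max_of_le_left (le_max_left _ _)
    · exact le_max_of_le_left (le_max_right _ _)
    · exact le_max_of_le_right (le_max_left _ _)
    · exact le_max_of_le_right (le_max_right _ _)
  have hlex : M ≤ ‖x‖ := by
    apply max_le <;> apply max_le <;> exact norm_le_pi_norm x _
  have hxM : ‖x‖ = M := le_antisymm hxle hlex
  -- upper bound
  have hup : ‖Qf p a x‖ ≤ M ^ 2 := by
    rw [hfdef]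
    refine (Padic.nonarchimedean _ _).trans ?_
    rw [hg1, hpg2]
    apply max_le
    · exact pow_le_pow_left₀ hM1n (le_max_left _ _) 2
    · calc (p : ℝ)⁻¹ * M2 ^ 2 ≤ 1 * M2 ^ 2 := by
            apply mul_le_mul_of_nonneg_right _ (sq_nonneg _)
            exact inv_le_one_of_one_le₀ hp1.le
        _ = M2 ^ 2 := one_mul _
        _ ≤ M ^ 2 := pow_le_pow_left₀ hM2n (le_max_right _ _) 2
  -- lower bound
  have hlow : (p : ℝ)⁻¹ * M ^ 2 ≤ ‖Qf p a x‖ := by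
    by_cases h1 : g1 = 0
    · have hM10 : M1 = 0 := by
        have : M1 ^ 2 = 0 := by rw [← hg1, h1, norm_zero]
        exact pow_eq_zero_iff two_ne_zero |>.mp this
      by_cases h2 : g2 = 0
      · have hM20 : M2 = 0 := by
          have : M2 ^ 2 = 0 := by rw [← hg2, h2, norm_zero]
          exact pow_eq_zero_iff two_ne_zero |>.mp this
        have : M = 0 := by rw [hM, hM10, hM20, max_self]
        rw [this]
        simp [norm_nonneg]
      · have hMeq : M = M2 := by rw [hM, hM10]; exact max_eq_right hM2n
        rw [hfdef, h1, zero_add, hpg2, hMeq]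
    · by_cases h2 : g2 = 0
      · have hM20 : M2 = 0 := by
          have : M2 ^ 2 = 0 := by rw [← hg2, h2, norm_zero]
          exact pow_eq_zero_iff two_ne_zero |>.mp this
        have hMeq : M = M1 := by rw [hM, hM20]; exact max_eq_left hM1n
        rw [hfdef, h2, mul_zero, neg_zero, add_zero, hg1, hMeq]
        calc (p : ℝ)⁻¹ * M1 ^ 2 ≤ 1 * M1 ^ 2 :=
              mul_le_mul_of_nonneg_right (inv_le_one_of_one_le₀ hp1.le) (sq_nonneg _)
          _ = M1 ^ 2 := one_mul _
      · -- both nonzero : norms differ by parity of valuation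
        have hM1pos : M1 ≠ 0 := by
          intro h0
          apply h1
          rw [← norm_eq_zero, hg1, h0]; norm_num
        have hM2pos : M2 ≠ 0 := by
          intro h0
          apply h2
          rw [← norm_eq_zero, hg2, h0]; norm_num
        obtain ⟨k1, hk1⟩ := aux_pow (x 0) (x 1) hM1pos
        obtain ⟨k2, hk2⟩ := aux_pow (x 2) (x 3) hM2pos
        rw [← hM1] at hk1
        rw [← hM2] at hk2
        have hne : ‖g1‖ ≠ ‖-((p : ℚ_[p]) * g2)‖ := by
          rw [hg1, hpg2, hk1, hk2]
          intro hcontra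
          rw [← zpow_natCast ((p:ℝ) ^ k1), ← zpow_natCast ((p:ℝ) ^ k2), ← zpow_mul, ← zpow_mul,
            ← zpow_neg_one, ← zpow_add₀ hp0.ne'] at hcontra
          have := (zpow_right_inj₀ hp0 hp1.ne').mp hcontra
          omega
        have heq : ‖Qf p a x‖ = max ‖g1‖ ‖-((p : ℚ_[p]) * g2)‖ := by
          rw [hfdef]; exact Padic.add_eq_max_of_ne hne
        rw [heq, hg1, hpg2]
        have hstep : (p : ℝ)⁻¹ * M ^ 2 ≤ max ((p : ℝ)⁻¹ * M1 ^ 2) ((p : ℝ)⁻¹ * M2 ^ 2) := by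
          rcases max_cases M1 M2 with ⟨he, _⟩ | ⟨he, _⟩ <;> rw [hM, he]
          · exact le_max_left _ _
          · exact le_max_right _ _
        refine hstep.trans (max_le_max ?_ le_rfl)
        calc (p : ℝ)⁻¹ * M1 ^ 2 ≤ 1 * M1 ^ 2 :=
              mul_le_mul_of_nonneg_right (inv_le_one_of_one_le₀ hp1.le) (sq_nonneg _)
          _ = M1 ^ 2 := one_mul _
  constructor
  · rw [hxM]; exact hlow
  · rw [hxM, one_mul]; exact hup
end

section
/- Let p be an odd prime, a ∈ Z a quadratic non-residue mod p, and f(x) = x_1² − a x_2² − p x_3² + a p x_4². Let U = {x ∈ Z_p⁴ : ‖x‖_p = 1}. Then for every α ∈ C, ∫_U |f(x)|_p^{α−2} d⁴x = (1 − p^{−2})(1 + p^{−α}). -/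
open MeasureTheory Complex Classical Filter

variable (p : ℕ) [Fact p.Prime]

/-! Reduce modulo `p`. The unit sphere of `ℤ_p⁴` is the disjoint union of the `p⁴ - 1` residue
classes `x ≡ v (mod p)` with `v ≠ 0`, each of Haar measure `p⁻⁴`. Write
`f = (x₁² - a x₂²) - p (x₃² - a x₄²)`; as `a` is not a square mod `p`, the binary form
`x² - a y²` is anisotropic over `𝔽_p`. Hence `|f|_p = 1` on the `p² (p² - 1)` classes with
`(v₁, v₂) ≠ 0`, while on the remaining `p² - 1` classes `f = -p (unit)` and `|f|_p = p⁻¹`.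
Summing, `p⁻⁴ (p² - 1) (p² + p^(2 - α)) = (1 - p⁻²) (1 + p^(-α))`. -/

open Metric Function

theorem sq_sub_mul_sq_ne_zero {K : Type*} [Field K] {a : K} (ha : ¬IsSquare a) {x y : K}
    (h : x ≠ 0 ∨ y ≠ 0) : x ^ 2 - a * y ^ 2 ≠ 0 := by
  intro hxy
  rcases eq_or_ne y 0 with rfl | hy
  · simp_all
  · exact ha ⟨x / y, by field_simp; linear_combination -hxy⟩

theorem Complex.ofReal_inv_natCast_cpow (n : ℕ) (s : ℂ) :
    (((n : ℝ)⁻¹ : ℝ) : ℂ) ^ s = (n : ℂ) ^ (-s) := by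
  rw [ofReal_inv, ofReal_natCast, inv_cpow _ _ (by rw [natCast_arg]; exact Real.pi_ne_zero.symm),
    cpow_neg]

namespace PadicInt

variable {p}

theorem norm_lt_one_iff_toZMod_eq_zero (z : ℤ_[p]) : ‖z‖ < 1 ↔ toZMod z = 0 := by
  rw [← RingHom.mem_ker, ker_toZMod, IsLocalRing.mem_maximalIdeal, mem_nonunits]

theorem norm_eq_one_iff_toZMod_ne_zero (z : ℤ_[p]) : ‖z‖ = 1 ↔ toZMod z ≠ 0 := by
  rw [ne_eq, ← norm_lt_one_iff_toZMod_eq_zero, not_lt, (norm_le_one z).ge_iff_eq', eq_comm]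

theorem norm_sq_sub_mul_sq_sub_p_mul_eq_one {a : ℤ} (ha : ¬IsSquare (a : ZMod p))
    {z w s t : ℤ_[p]} (h : toZMod z ≠ 0 ∨ toZMod w ≠ 0) :
    ‖z ^ 2 - a * w ^ 2 - p * (s ^ 2 - a * t ^ 2)‖ = 1 := by
  rw [norm_eq_one_iff_toZMod_ne_zero]
  simpa using sq_sub_mul_sq_ne_zero ha h

theorem norm_sub_natCast_val_lt_one_iff (z : ℤ_[p]) (w : ZMod p) :
    ‖z - ((w.val : ℕ) : ℤ_[p])‖ < 1 ↔ toZMod z = w := by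
  rw [norm_lt_one_iff_toZMod_eq_zero, map_sub, map_natCast, ZMod.natCast_zmod_val, sub_eq_zero]

end PadicInt

namespace Padic

variable {p}

theorem norm_sub_natCast_val_lt_one_iff {x : ℚ_[p]} {w : ZMod p} :
    ‖x - ((w.val : ℕ) : ℚ_[p])‖ < 1 ↔
      ∃ z : ℤ_[p], (z : ℚ_[p]) = x ∧ PadicInt.toZMod z = w := by
  constructor
  · intro hx
    have hx1 : ‖x‖ ≤ 1 := by
      simpa using (Padic.nonarchimedean (x - ((w.val : ℕ) : ℚ_[p])) ((w.val : ℕ) : ℚ_[p])).trans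
        (max_le hx.le (by exact_mod_cast PadicInt.norm_le_one (w.val : ℤ_[p])))
    exact ⟨⟨x, hx1⟩, rfl, (PadicInt.norm_sub_natCast_val_lt_one_iff _ w).1 hx⟩
  · rintro ⟨z, rfl, rfl⟩
    simpa [PadicInt.norm_def] using (PadicInt.norm_sub_natCast_val_lt_one_iff z _).2 rfl

end Padic

section ResidueBall

variable {p} {n : ℕ}

def residueBall (v : Fin n → ZMod p) : Set (Fin n → ℚ_[p]) :=
  ball (fun i => (((v i).val : ℕ) : ℚ_[p])) 1

theorem mem_residueBall_iff {v : Fin n → ZMod p} {x : Fin n → ℚ_[p]} :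
    x ∈ residueBall v ↔ ∀ i, ∃ z : ℤ_[p], (z : ℚ_[p]) = x i ∧ PadicInt.toZMod z = v i := by
  simp only [residueBall, mem_ball, dist_eq_norm, pi_norm_lt_iff one_pos, Pi.sub_apply,
    Padic.norm_sub_natCast_val_lt_one_iff]

theorem measurableSet_residueBall (v : Fin n → ZMod p) : MeasurableSet (residueBall v) :=
  measurableSet_ball

theorem residueBall_zero : residueBall (0 : Fin n → ZMod p) = ball 0 1 := by
  simp [residueBall, Pi.zero_def]

theorem pairwise_disjoint_residueBall :
    Pairwise (Disjoint on (residueBall : (Fin n → ZMod p) → Set (Fin n → ℚ_[p]))) := by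
  intro v w hvw
  refine Set.disjoint_left.2 fun x hv hw => hvw (funext fun i => ?_)
  obtain ⟨z, hz, hzv⟩ := mem_residueBall_iff.1 hv i
  obtain ⟨z', hz', hzw⟩ := mem_residueBall_iff.1 hw i
  rw [← hzv, ← hzw, PadicInt.ext (hz.trans hz'.symm)]

theorem closedBall_zero_one_eq_iUnion_residueBall :
    closedBall (0 : Fin n → ℚ_[p]) 1 = ⋃ v, residueBall v := by
  ext x
  simp only [mem_closedBall_zero_iff, pi_norm_le_iff_of_nonneg zero_le_one, Set.mem_iUnion,
    mem_residueBall_iff]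
  constructor
  · intro hx
    exact ⟨fun i => PadicInt.toZMod ⟨x i, hx i⟩, fun i => ⟨⟨x i, hx i⟩, rfl, rfl⟩⟩
  · rintro ⟨v, hv⟩ i
    obtain ⟨z, hz, -⟩ := hv i
    exact hz ▸ z.norm_le_one

theorem sphere_zero_one_eq_iUnion_residueBall :
    sphere (0 : Fin n → ℚ_[p]) 1 = ⋃ v ∈ Finset.univ.erase 0, residueBall v := by
  rw [← closedBall_sdiff_ball, closedBall_zero_one_eq_iUnion_residueBall, ← residueBall_zero]
  ext x
  simp only [Set.mem_sdiff, Set.mem_iUnion, Finset.mem_erase, Finset.mem_univ, and_true]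
  constructor
  · rintro ⟨⟨v, hv⟩, h0⟩
    exact ⟨v, fun h => h0 (h ▸ hv), hv⟩
  · rintro ⟨v, hv0, hv⟩
    exact ⟨⟨v, hv⟩, fun h0 => Set.disjoint_left.1 (pairwise_disjoint_residueBall hv0) hv h0⟩

instance : (haarQn p n).IsAddHaarMeasure := by
  unfold haarQn
  infer_instance

theorem haarQn_closedBall_zero_one : haarQn p n (closedBall 0 1) = 1 :=
  Measure.addHaarMeasure_self

theorem haarQn_residueBall (v : Fin n → ZMod p) :
    haarQn p n (residueBall v) = ((p : ENNReal) ^ n)⁻¹ := by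
  have hball : ∀ w : Fin n → ZMod p, haarQn p n (residueBall w) = haarQn p n (ball 0 1) :=
    fun w => Measure.addHaar_ball_center _ _ _
  have hsum : (p : ENNReal) ^ n * haarQn p n (ball 0 1) = 1 := by
    have := measure_iUnion (μ := haarQn p n) pairwise_disjoint_residueBall
      fun w => measurableSet_ball
    rw [← closedBall_zero_one_eq_iUnion_residueBall, haarQn_closedBall_zero_one] at this
    simp_rw [tsum_fintype, hball, Finset.sum_const, Finset.card_univ] at this
    simpa [Fintype.card_fun, ZMod.card] using this.symm
  rw [hball, ← ENNReal.eq_inv_of_mul_eq_one_left (by rwa [mul_comm] at hsum)]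

theorem setIntegral_biUnion_residueBall {E : Type*} [NormedAddCommGroup E] [NormedSpace ℝ E]
    [CompleteSpace E] (s : Finset (Fin n → ZMod p)) {F : (Fin n → ℚ_[p]) → E}
    {g : (Fin n → ZMod p) → E}
    (hF : ∀ v ∈ s, ∀ x ∈ residueBall v, F x = g v) :
    ∫ x in ⋃ v ∈ s, residueBall v, F x ∂haarQn p n = ((p : ℝ) ^ n)⁻¹ • ∑ v ∈ s, g v := by
  have hint : ∀ v ∈ s, IntegrableOn F (residueBall v) (haarQn p n) := fun v hv =>
    (integrableOn_const (by simp [haarQn_residueBall, (Fact.out : p.Prime).ne_zero])).congr_fun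
      (fun x hx => (hF v hv x hx).symm) (measurableSet_residueBall v)
  rw [integral_biUnion_finset s (fun v _ => measurableSet_residueBall v)
    (pairwise_disjoint_residueBall.set_pairwise _) hint, Finset.smul_sum]
  refine Finset.sum_congr rfl fun v hv => ?_
  rw [setIntegral_congr_fun (measurableSet_residueBall v) (hF v hv), setIntegral_const,
    measureReal_def, haarQn_residueBall]
  simp

end ResidueBall

section QuadraticForm

variable {p}

theorem norm_Qf_of_mem_residueBall {a : ℤ} (ha : ¬IsSquare (a : ZMod p))
    {v : Fin 4 → ZMod p} (hv : v ≠ 0) {x : Fin 4 → ℚ_[p]} (hx : x ∈ residueBall v) :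
    ‖Qf p a x‖ = if v 0 = 0 ∧ v 1 = 0 then (p : ℝ)⁻¹ else 1 := by
  choose z hzx hzv using mem_residueBall_iff.1 hx
  have hQf :
      Qf p a x = ((z 0 ^ 2 - a * z 1 ^ 2 - p * (z 2 ^ 2 - a * z 3 ^ 2) : ℤ_[p]) : ℚ_[p]) := by
    simp only [Qf, ← hzx]
    push_cast
    ring
  rw [hQf, ← PadicInt.norm_def]
  split_ifs with h01
  · have hdvd : ∀ i, v i = 0 → (p : ℤ_[p]) ∣ z i := fun i hi =>
      (PadicInt.norm_lt_one_iff_dvd _).1 ((PadicInt.norm_lt_one_iff_toZMod_eq_zero _).2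
        ((hzv i).trans hi))
    obtain ⟨y0, hy0⟩ := hdvd 0 h01.1
    obtain ⟨y1, hy1⟩ := hdvd 1 h01.2
    have h23 : PadicInt.toZMod (z 2) ≠ 0 ∨ PadicInt.toZMod (z 3) ≠ 0 := by
      rw [hzv, hzv]
      by_contra! h
      exact hv (funext fun i => by fin_cases i <;> simp [h01, h])
    -- on `pℤ_p × pℤ_p × ℤ_p²` the form is `-p` times the form with its two halves swapped
    rw [hy0, hy1, show (p * y0) ^ 2 - a * (p * y1) ^ 2 - p * (z 2 ^ 2 - a * z 3 ^ 2) =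
        -(p * (z 2 ^ 2 - a * z 3 ^ 2 - p * (y0 ^ 2 - a * y1 ^ 2))) by ring,
      norm_neg, norm_mul, PadicInt.norm_p,
      PadicInt.norm_sq_sub_mul_sq_sub_p_mul_eq_one ha h23, mul_one]
  · refine PadicInt.norm_sq_sub_mul_sq_sub_p_mul_eq_one ha ?_
    rw [hzv, hzv]
    exact not_and_or.1 h01

theorem sum_erase_zero_ite_eq {R : Type*} [CommRing R] (q : R) :
    ∑ v ∈ Finset.univ.erase (0 : Fin 4 → ZMod p), (if v 0 = 0 ∧ v 1 = 0 then q else 1) =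
      ((p : R) ^ 2 - 1) * (q + (p : R) ^ 2) := by
  have hcard : (Finset.univ.filter fun v : Fin 4 → ZMod p => v 0 = 0 ∧ v 1 = 0).card =
      p ^ 2 := by
    rw [show (Finset.univ.filter fun v : Fin 4 → ZMod p => v 0 = 0 ∧ v 1 = 0) =
        Fintype.piFinset ![{0}, {0}, Finset.univ, Finset.univ] by
      ext v
      simp [Fintype.mem_piFinset, Fin.forall_fin_succ],
      Fintype.card_piFinset, Fin.prod_univ_four]
    simp [ZMod.card, sq]
  have hsplit := Finset.card_filter_add_card_filter_not
    (s := (Finset.univ : Finset (Fin 4 → ZMod p))) fun v => v 0 = 0 ∧ v 1 = 0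
  rw [hcard, Finset.card_univ, Fintype.card_fun, ZMod.card, Fintype.card_fin] at hsplit
  rw [Finset.sum_erase_eq_sub (Finset.mem_univ _), Finset.sum_ite, Finset.sum_const,
    Finset.sum_const, hcard]
  have hsplit' := congrArg (Nat.cast : ℕ → R) hsplit
  simp only [Pi.zero_apply, and_self, if_true, nsmul_eq_mul, mul_one]
  push_cast at hsplit' ⊢
  linear_combination hsplit'

end QuadraticForm

theorem integral_over_units_general (p : ℕ) [Fact p.Prime]
    (a : ℤ) (ha : legendreSym p a = -1) (α : ℂ) :
    ∫ x in {x : Fin 4 → ℚ_[p] | ‖x‖ = 1}, ((‖Qf p a x‖ : ℂ) ^ (α - 2)) ∂haarQn p 4 =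
      (1 - (p : ℂ) ^ (-(2 : ℂ))) * (1 + (p : ℂ) ^ (-α)) := by
  have ha' : ¬IsSquare (a : ZMod p) := (legendreSym.eq_neg_one_iff p).1 ha
  have hU : {x : Fin 4 → ℚ_[p] | ‖x‖ = 1} = ⋃ v ∈ Finset.univ.erase 0, residueBall v := by
    rw [← sphere_zero_one_eq_iUnion_residueBall]
    ext x
    simp
  rw [hU, setIntegral_biUnion_residueBall _ (g := fun v =>
      if v 0 = 0 ∧ v 1 = 0 then (((p : ℝ)⁻¹ : ℝ) : ℂ) ^ (α - 2) else 1)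
    fun v hv x hx => by
      rw [norm_Qf_of_mem_residueBall ha' (Finset.ne_of_mem_erase hv) hx]
      split_ifs <;> simp,
    sum_erase_zero_ite_eq]
  have hp0 : (p : ℂ) ≠ 0 := Nat.cast_ne_zero.2 (Fact.out : p.Prime).ne_zero
  rw [Complex.ofReal_inv_natCast_cpow, neg_sub, Complex.cpow_sub _ _ hp0, Complex.cpow_neg,
    Complex.cpow_neg, Complex.cpow_ofNat, Complex.real_smul]
  push_cast
  field_simp
  ring

/-- For every `α ∈ ℂ`, `∫_U |f(x)|_p^{α-2} d⁴x = (1 - p^{-2})(1 + p^{-α})`, where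
`U = {x ∈ ℤ_p⁴ : ‖x‖_p = 1}`. -/
theorem integral_over_units (p : ℕ) [Fact p.Prime] (hp : p ≠ 2)
    (a : ℤ) (ha : legendreSym p a = -1) (α : ℂ) :
    ∫ x in {x : Fin 4 → ℚ_[p] | ‖x‖ = 1}, ((‖Qf p a x‖ : ℂ) ^ (α - 2)) ∂haarQn p 4 =
      (1 - (p : ℂ) ^ (-(2 : ℂ))) * (1 + (p : ℂ) ^ (-α)) :=
  integral_over_units_general p a ha α
end
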